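/- arXiv:2204.13401 — 8 statements merged into one kernel-verified Lean document; each statement's English description precedes it below -/
import Mathlib

section
/- If f : X → X' is an L-morphism of meet-semilattices, then for all filters a', b' of X', f⁻¹(a' ⋎ b') = f⁻¹(a') ⋎ f⁻¹(b'), where ⋎ denotes the join in the lattice of filters. -/
/-- A filter of a meet-semilattice: an upward-closed subset closed under binary
meets. -/
def IsFilt {X : Type*} [SemilatticeInf X] (s : Set X) : Prop :=
  (∀ x y : X, x ∈ s → x ≤ y → y ∈ s) ∧ ∀ x y : X, x ∈ s → y ∈ s → x ⊓ y ∈ s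

/-- The join of two filters: the smallest filter containing both. -/
def filtJoin {X : Type*} [SemilatticeInf X] (a b : Set X) : Set X :=
  ⋂₀ {c : Set X | IsFilt c ∧ a ⊆ c ∧ b ⊆ c}

lemma mem_filtJoin_of {X : Type*} [SemilatticeInf X] {a b : Set X} {x : X}
    (h : ∃ y ∈ a, ∃ z ∈ b, y ⊓ z ≤ x) : x ∈ filtJoin a b := by
  obtain ⟨y, hy, z, hz, hle⟩ := h
  intro c hc
  exact hc.1.1 _ _ (hc.1.2 _ _ (hc.2.1 hy) (hc.2.2 hz)) hle

lemma left_subset_filtJoin {X : Type*} [SemilatticeInf X] {a b : Set X} :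
    a ⊆ filtJoin a b := fun _ hx _ hc => hc.2.1 hx

lemma right_subset_filtJoin {X : Type*} [SemilatticeInf X] {a b : Set X} :
    b ⊆ filtJoin a b := fun _ hx _ hc => hc.2.2 hx

lemma filtJoin_eq {X : Type*} [SemilatticeInf X] {a b : Set X}
    (ha : IsFilt a) (hb : IsFilt b) (hane : a.Nonempty) (hbne : b.Nonempty) :
    filtJoin a b = {x | ∃ y ∈ a, ∃ z ∈ b, y ⊓ z ≤ x} := by
  apply subset_antisymm
  · intro x hx
    apply hx
    refine ⟨⟨?_, ?_⟩, ?_, ?_⟩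
    · rintro u v ⟨y, hy, z, hz, h⟩ huv
      exact ⟨y, hy, z, hz, h.trans huv⟩
    · rintro u v ⟨y1, hy1, z1, hz1, h1⟩ ⟨y2, hy2, z2, hz2, h2⟩
      refine ⟨y1 ⊓ y2, ha.2 _ _ hy1 hy2, z1 ⊓ z2, hb.2 _ _ hz1 hz2, ?_⟩
      exact le_inf ((inf_le_inf inf_le_left inf_le_left).trans h1)
        ((inf_le_inf inf_le_right inf_le_right).trans h2)
    · intro y hy
      obtain ⟨z, hz⟩ := hbne
      exact ⟨y, hy, z, hz, inf_le_left⟩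
    · intro z hz
      obtain ⟨y, hy⟩ := hane
      exact ⟨y, hy, z, hz, inf_le_right⟩
  · intro x hx
    exact mem_filtJoin_of hx

lemma filtJoin_empty_left {X : Type*} [SemilatticeInf X] {b : Set X}
    (hb : IsFilt b) : filtJoin (∅ : Set X) b = b := by
  apply subset_antisymm
  · intro x hx
    exact hx b ⟨hb, Set.empty_subset _, subset_rfl⟩
  · exact right_subset_filtJoin

lemma filtJoin_empty_right {X : Type*} [SemilatticeInf X] {a : Set X}
    (ha : IsFilt a) : filtJoin a (∅ : Set X) = a := by
  apply subset_antisymm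
  · intro x hx
    exact hx a ⟨ha, subset_rfl, Set.empty_subset _⟩
  · exact left_subset_filtJoin

lemma isFilt_preimage {X X' : Type*} [SemilatticeInf X] [SemilatticeInf X']
    {f : X → X'} (hf : ∀ x y : X, f (x ⊓ y) = f x ⊓ f y) {s : Set X'}
    (hs : IsFilt s) : IsFilt (f ⁻¹' s) := by
  have hmono : ∀ x y : X, x ≤ y → f x ≤ f y := by
    intro x y hxy
    have : f (x ⊓ y) = f x := by rw [inf_eq_left.mpr hxy]
    rw [← this, hf]; exact inf_le_right
  constructor
  · intro x y hx hxy
    exact hs.1 _ _ hx (hmono _ _ hxy)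
  · intro x y hx hy
    show f (x ⊓ y) ∈ s
    rw [hf]; exact hs.2 _ _ hx hy

/-- If `f : X → X'` is an L-morphism of meet-semilattices (meet-preserving and
satisfying the back condition: whenever `y' ⊓ z' ≤ f x` there are `y, z` with
`y' ≤ f y`, `z' ≤ f z` and `y ⊓ z ≤ x`), then the preimage map preserves the
join of filters: `f⁻¹(a' ⋎ b') = f⁻¹(a') ⋎ f⁻¹(b')`. -/
theorem preimage_L_morphism_preserves_join {X X' : Type*} [SemilatticeInf X]
    [SemilatticeInf X'] (f : X → X')
    (hf : ∀ x y : X, f (x ⊓ y) = f x ⊓ f y)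
    (hL : ∀ (x : X) (y' z' : X'), y' ⊓ z' ≤ f x →
      ∃ y z : X, y' ≤ f y ∧ z' ≤ f z ∧ y ⊓ z ≤ x)
    (a' b' : Set X') (ha' : IsFilt a') (hb' : IsFilt b') :
    f ⁻¹' (filtJoin a' b') = filtJoin (f ⁻¹' a') (f ⁻¹' b') := by
  have hmono : ∀ x y : X, x ≤ y → f x ≤ f y := by
    intro x y hxy
    have : f (x ⊓ y) = f x := by rw [inf_eq_left.mpr hxy]
    rw [← this, hf]; exact inf_le_right
  rcases a'.eq_empty_or_nonempty with rfl | hane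
  · rw [filtJoin_empty_left hb', Set.preimage_empty,
      filtJoin_empty_left (isFilt_preimage hf hb')]
  rcases b'.eq_empty_or_nonempty with rfl | hbne
  · rw [filtJoin_empty_right ha', Set.preimage_empty,
      filtJoin_empty_right (isFilt_preimage hf ha')]
  have key : f ⁻¹' (filtJoin a' b')
      = {x | ∃ y ∈ f ⁻¹' a', ∃ z ∈ f ⁻¹' b', y ⊓ z ≤ x} := by
    ext x
    rw [Set.mem_preimage, filtJoin_eq ha' hb' hane hbne]
    constructor
    · rintro ⟨y', hy', z', hz', hle⟩
      obtain ⟨y, z, h1, h2, h3⟩ := hL x y' z' hle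
      exact ⟨y, ha'.1 _ _ hy' h1, z, hb'.1 _ _ hz' h2, h3⟩
    · rintro ⟨y, hy, z, hz, hle⟩
      refine ⟨f y, hy, f z, hz, ?_⟩
      rw [← hf]; exact hmono _ _ hle
  rcases (f ⁻¹' a').eq_empty_or_nonempty with hae | hane'
  · have hLHS : f ⁻¹' (filtJoin a' b') = ∅ := by
      rw [key]
      ext x
      simp [hae]
    have hbe : f ⁻¹' b' = ∅ := by
      have : f ⁻¹' b' ⊆ f ⁻¹' (filtJoin a' b') :=
        Set.preimage_mono right_subset_filtJoin
      rw [hLHS] at this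
      exact Set.subset_empty_iff.mp this
    rw [hLHS, hae, hbe, filtJoin_empty_left ⟨fun x y h _ => h.elim, fun x y h _ => h.elim⟩]
  rcases (f ⁻¹' b').eq_empty_or_nonempty with hbe | hbne'
  · have hLHS : f ⁻¹' (filtJoin a' b') = ∅ := by
      rw [key]
      ext x
      simp [hbe]
    have hae : f ⁻¹' a' = ∅ := by
      have : f ⁻¹' a' ⊆ f ⁻¹' (filtJoin a' b') :=
        Set.preimage_mono left_subset_filtJoin
      rw [hLHS] at this
      exact Set.subset_empty_iff.mp this
    rw [hLHS, hae, hbe, filtJoin_empty_left ⟨fun x y h _ => h.elim, fun x y h _ => h.elim⟩]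
  rw [key, filtJoin_eq (isFilt_preimage hf ha') (isFilt_preimage hf hb') hane' hbne']
end

section
/- If h : L → L' is a bounded lattice homomorphism, then the preimage map h⁻¹, restricted to proper nonempty filters, is an L-morphism: it preserves binary intersections, and whenever q ∩ r ⊆ h⁻¹(p') for proper nonempty filters q, r of L and p' of L', there exist filters q', r' of L' with q ⊆ h⁻¹(q'), r ⊆ h⁻¹(r'), and q' ∩ r' ⊆ p'. -/
/-- If `h : L → L'` is a bounded lattice homomorphism, then the preimage map
`h⁻¹` on proper nonempty filters is an L-morphism: it preserves binary
intersections, and whenever `q ∩ r ⊆ h⁻¹(p')` for proper nonempty filters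
`q, r` of `L` and `p'` of `L'`, there exist filters `q', r'` of `L'` with
`q ⊆ h⁻¹(q')`, `r ⊆ h⁻¹(r')` and `q' ∩ r' ⊆ p'`. -/
theorem preimage_of_bounded_lattice_hom_is_L_morphism
    {L L' : Type*} [Lattice L] [BoundedOrder L] [Lattice L'] [BoundedOrder L']
    (h : L → L')
    (hinf : ∀ a b : L, h (a ⊓ b) = h a ⊓ h b)
    (hsup : ∀ a b : L, h (a ⊔ b) = h a ⊔ h b)
    (htop : h ⊤ = ⊤) (hbot : h ⊥ = ⊥) :
    (∀ a' b' : Set L', h ⁻¹' (a' ∩ b') = (h ⁻¹' a') ∩ (h ⁻¹' b')) ∧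
    (∀ p' : Set L', ∀ q r : Set L,
      IsFilt p' → p'.Nonempty → p' ≠ Set.univ →
      IsFilt q → q.Nonempty → q ≠ Set.univ →
      IsFilt r → r.Nonempty → r ≠ Set.univ →
      q ∩ r ⊆ h ⁻¹' p' →
      ∃ q' r' : Set L', IsFilt q' ∧ IsFilt r' ∧
        q ⊆ h ⁻¹' q' ∧ r ⊆ h ⁻¹' r' ∧ q' ∩ r' ⊆ p') := by
  constructor
  · intro a' b'; rfl
  · intro p' q r hp' _ _ hq _ _ hr _ _ hsub
    refine ⟨{y | ∃ a ∈ q, h a ≤ y}, {y | ∃ b ∈ r, h b ≤ y}, ?_, ?_, ?_, ?_, ?_⟩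
    · exact ⟨fun x y ⟨a, ha, hax⟩ hxy => ⟨a, ha, hax.trans hxy⟩,
        fun x y ⟨a, ha, hax⟩ ⟨b, hb, hby⟩ =>
          ⟨a ⊓ b, hq.2 a b ha hb, by rw [hinf]; exact inf_le_inf hax hby⟩⟩
    · exact ⟨fun x y ⟨a, ha, hax⟩ hxy => ⟨a, ha, hax.trans hxy⟩,
        fun x y ⟨a, ha, hax⟩ ⟨b, hb, hby⟩ =>
          ⟨a ⊓ b, hr.2 a b ha hb, by rw [hinf]; exact inf_le_inf hax hby⟩⟩
    · exact fun a ha => ⟨a, ha, le_rfl⟩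
    · exact fun b hb => ⟨b, hb, le_rfl⟩
    · rintro y ⟨⟨a, ha, hay⟩, ⟨b, hb, hby⟩⟩
      have hab : a ⊔ b ∈ q ∩ r :=
        ⟨hq.1 a (a ⊔ b) ha le_sup_left, hr.1 b (a ⊔ b) hb le_sup_right⟩
      exact hp'.1 _ y (hsub hab) (by rw [hsup]; exact sup_le hay hby)
end

section
/- In an M-space, a filter is closed (as a subset of the topological space) if and only if it is principal (i.e., empty or of the form ↑x for some point x). -/
/-- In an M-space (a compact topological meet-semilattice satisfying the HMS
separation axiom), a filter is topologically closed iff it is principal, i.e.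
empty or of the form `↑x` for some point `x`. -/
theorem mspace_closed_filter_iff_principal {X : Type*} [SemilatticeInf X]
    [TopologicalSpace X] [CompactSpace X]
    (hms : ∀ x y : X, ¬ x ≤ y → ∃ a : Set X, IsClopen a ∧ IsFilt a ∧ x ∈ a ∧ y ∉ a)
    (c : Set X) (hc : IsFilt c) :
    IsClosed c ↔ (c = ∅ ∨ ∃ x : X, c = Set.Ici x) := by
  have hIic : ∀ y : X, IsClosed (Set.Iic y) := by
    intro y
    rw [← isOpen_compl_iff, isOpen_iff_mem_nhds]
    intro z hz
    obtain ⟨a, ha, hf, hza, hya⟩ := hms z y hz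
    refine Filter.mem_of_superset (ha.2.mem_nhds hza) ?_
    intro w hw hwy
    exact hya (hf.1 w y hw hwy)
  constructor
  · intro hclosed
    rcases c.eq_empty_or_nonempty with h | ⟨y0, hy0⟩
    · exact Or.inl h
    right
    have hcomp : IsCompact c := hclosed.isCompact
    have key : (c ∩ ⋂ y : c, Set.Iic (y : X)).Nonempty := by
      apply hcomp.inter_iInter_nonempty
      · intro y; exact hIic y
      · intro u
        classical
        have : ∃ m ∈ c, ∀ y ∈ u, m ≤ (y : X) := by
          induction u using Finset.induction with
          | empty => exact ⟨y0, hy0, by simp⟩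
          | @insert z s hzs ih =>
            obtain ⟨m, hm, hmle⟩ := ih
            refine ⟨m ⊓ z, hc.2 _ _ hm z.2, ?_⟩
            intro y hy
            rcases Finset.mem_insert.1 hy with rfl | hy
            · exact inf_le_right
            · exact le_trans inf_le_left (hmle y hy)
        obtain ⟨m, hm, hmle⟩ := this
        exact ⟨m, hm, Set.mem_iInter₂.2 fun y hy => hmle y hy⟩
    obtain ⟨x, hx, hxle⟩ := key
    refine ⟨x, Set.Subset.antisymm ?_ ?_⟩
    · intro y hy; exact Set.mem_iInter.1 hxle ⟨y, hy⟩
    · intro y hy; exact hc.1 x y hx hy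
  · rintro (rfl | ⟨x, rfl⟩)
    · exact isClosed_empty
    · rw [← isOpen_compl_iff, isOpen_iff_mem_nhds]
      intro z hz
      obtain ⟨a, ha, hf, hxa, hza⟩ := hms x z hz
      refine Filter.mem_of_superset (ha.compl.2.mem_nhds hza) ?_
      intro w hw hxw
      exact hw (hf.1 x w hxa hxw)
end

section
/- In an M-space, every closed filter is the intersection of the clopen filters containing it. -/
/-- In an M-space, every closed filter is the intersection of the clopen
filters containing it. -/
theorem mspace_closed_filter_eq_sInter_clopen {X : Type*} [SemilatticeInf X]
    [TopologicalSpace X] [CompactSpace X]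
    (hms : ∀ x y : X, ¬ x ≤ y → ∃ a : Set X, IsClopen a ∧ IsFilt a ∧ x ∈ a ∧ y ∉ a)
    (c : Set X) (hc : IsFilt c) (hcl : IsClosed c) :
    c = ⋂₀ {a : Set X | IsClopen a ∧ IsFilt a ∧ c ⊆ a} := by
  classical
  apply subset_antisymm
  · intro z hz a ha
    exact ha.2.2 hz
  · intro z hz
    by_contra hzc
    rcases c.eq_empty_or_nonempty with hce | ⟨x0, hx0⟩
    · exact hzc (by simpa [hce] using hz ∅ ⟨isClopen_empty,
        ⟨fun x y hx _ => hx.elim, fun x y hx _ => hx.elim⟩, by simp [hce]⟩)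
    · -- down-sets are closed
      have hdown : ∀ x : X, IsClosed {w : X | w ≤ x} := by
        intro x
        rw [← isOpen_compl_iff, isOpen_iff_forall_mem_open]
        intro w hw
        obtain ⟨a, hao, haf, hwa, hxa⟩ := hms w x hw
        exact ⟨a, fun v hv hvx => hxa (haf.1 v x hv hvx), hao.2, hwa⟩
      have hcc : IsCompact c := hcl.isCompact
      have key : (c ∩ ⋂ x : c, {w : X | w ≤ (x : X)}).Nonempty := by
        apply hcc.inter_iInter_nonempty
        · intro i; exact hdown i
        · intro u
          have huu : ∃ m ∈ c, ∀ i ∈ u, m ≤ (i : X) := by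
            induction u using Finset.induction with
            | empty => exact ⟨x0, hx0, by simp⟩
            | @insert a u hni ih =>
              obtain ⟨m, hm, hmu⟩ := ih
              refine ⟨m ⊓ (a : X), hc.2 _ _ hm a.2, fun i hi => ?_⟩
              rcases Finset.mem_insert.mp hi with h | h
              · rw [h]; exact inf_le_right
              · exact le_trans inf_le_left (hmu i h)
          obtain ⟨m, hm, hmu⟩ := huu
          exact ⟨m, hm, by simpa using hmu⟩
      obtain ⟨m, hmc, hmle⟩ := key
      rw [Set.mem_iInter] at hmle
      have hmz : ¬ m ≤ z := fun h => hzc (hc.1 m z hmc h)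
      obtain ⟨a, hao, haf, hma, hza⟩ := hms m z hmz
      exact hza (hz a ⟨hao, haf, fun x hx => haf.1 m x hma (hmle ⟨x, hx⟩)⟩)
end

section
/- In an M-space, the upward closure of any closed set is closed. -/
/-- In an M-space, the upward closure of a closed set is closed. -/
theorem mspace_upward_closure_of_closed_isClosed {X : Type*} [SemilatticeInf X]
    [TopologicalSpace X] [CompactSpace X]
    (hms : ∀ x y : X, ¬ x ≤ y → ∃ a : Set X, IsClopen a ∧ IsFilt a ∧ x ∈ a ∧ y ∉ a)
    (c : Set X) (hcl : IsClosed c) :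
    IsClosed {y : X | ∃ x ∈ c, x ≤ y} := by
  rw [← isOpen_compl_iff, isOpen_iff_forall_mem_open]
  intro y hy
  simp only [Set.mem_compl_iff, Set.mem_setOf_eq, not_exists, not_and] at hy
  have hc : IsCompact c := hcl.isCompact
  choose! a ha using fun x (hx : x ∈ c) => hms x y (hy x hx)
  obtain ⟨t, htc, htfin, ht⟩ := hc.elim_finite_subcover_image
    (fun x hx => (ha x hx).1.2) (fun x hx => Set.mem_biUnion hx (ha x hx).2.2.1)
  refine ⟨(⋃ x ∈ t, a x)ᶜ, ?_, ?_, ?_⟩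
  · intro z hz hz'
    obtain ⟨x, hxc, hxz⟩ := hz'
    obtain ⟨x₀, hx₀t, hx₀⟩ := Set.mem_iUnion₂.mp (ht hxc)
    exact hz (Set.mem_biUnion hx₀t ((ha x₀ (htc hx₀t)).2.1.1 x z hx₀ hxz))
  · exact (Set.Finite.isClosed_biUnion htfin fun x hx => (ha x (htc hx)).1.1).isOpen_compl
  · intro hyU
    obtain ⟨x, hxt, hx⟩ := Set.mem_iUnion₂.mp hyU
    exact (ha x (htc hxt)).2.2.2 hx
end

section
/- For any bounded meet-semilattice A, the space of proper nonempty filters of A, topologized by the subbasis consisting of the sets θ(a) = {x : a ∈ x} and their complements for a ∈ A, is compact. -/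
variable (A : Type*) [SemilatticeInf A] [BoundedOrder A]

/-- The points of the dual space of a bounded meet-semilattice `A`: the proper
nonempty filters of `A`. -/
def Pt : Type _ := {x : Set A // IsFilt x ∧ x.Nonempty ∧ ⊥ ∉ x}

/-- The basic sets `θ a = {x : a ∈ x}`. -/
def theta (a : A) : Set (Pt A) := {x : Pt A | a ∈ x.1}

/-- The Stone-type topology on the space of proper nonempty filters of `A`,
generated by the subbasis of the sets `θ a` and their complements. -/
def ptTop : TopologicalSpace (Pt A) :=
  TopologicalSpace.generateFrom
    ({s | ∃ a : A, s = theta A a} ∪ {s | ∃ a : A, s = (theta A a)ᶜ})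

section

variable {A}

lemma theta_top : theta A ⊤ = Set.univ := by
  refine Set.eq_univ_of_forall fun x => ?_
  obtain ⟨⟨upward, _⟩, ⟨a, ha⟩, _⟩ := x.2
  exact upward a ⊤ ha le_top

lemma theta_bot : theta A ⊥ = ∅ :=
  Set.eq_empty_of_forall_notMem fun x => x.2.2.2

lemma theta_inf (a b : A) : theta A (a ⊓ b) = theta A a ∩ theta A b := by
  ext x
  obtain ⟨upward, inf_mem⟩ := x.2.1
  exact ⟨fun h => ⟨upward _ _ h inf_le_left, upward _ _ h inf_le_right⟩,
    fun ⟨ha, hb⟩ => inf_mem _ _ ha hb⟩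

def Pt.ofFilter (F : Filter (Pt A)) [F.NeBot] : Pt A :=
  ⟨{a | theta A a ∈ F},
    ⟨fun _ _ ha hab => F.mem_of_superset ha fun x hx => x.2.1.1 _ _ hx hab,
      fun a b ha hb => by simpa only [Set.mem_ofPred_eq, theta_inf] using F.inter_mem ha hb⟩,
    ⟨⊤, by simp only [Set.mem_ofPred_eq, theta_top, Filter.univ_mem]⟩,
    by simp only [Set.mem_ofPred_eq, theta_bot, Filter.empty_notMem, not_false_eq_true]⟩

lemma Ultrafilter.le_nhds_ofFilter (F : Ultrafilter (Pt A)) :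
    (F : Filter (Pt A)) ≤ @nhds _ (ptTop A) (Pt.ofFilter (F : Filter (Pt A))) := by
  rw [← Filter.tendsto_id', ptTop, TopologicalSpace.tendsto_nhds_generateFrom_iff]
  rintro s (⟨a, rfl⟩ | ⟨a, rfl⟩) hs
  · exact hs
  · exact F.compl_mem_iff_notMem.mpr hs

end

/-- The space of proper nonempty filters of a bounded meet-semilattice,
with the topology generated by the sets `θ a` and their complements,
is compact. -/
theorem pt_space_compact : @CompactSpace (Pt A) (ptTop A) := by
  let := ptTop A
  exact ⟨isCompact_iff_ultrafilter_le_nhds.mpr fun F _ =>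
    ⟨Pt.ofFilter (F : Filter (Pt A)), Set.mem_univ _, F.le_nhds_ofFilter⟩⟩
end

section
/- Every M-space has all nonempty infima; in particular every M-space has a least element. -/
/-- Every M-space has all nonempty infima; in particular it has a least
element. -/
theorem mspace_has_nonempty_infima {X : Type*} [Nonempty X] [SemilatticeInf X]
    [TopologicalSpace X] [CompactSpace X]
    (hms : ∀ x y : X, ¬ x ≤ y → ∃ a : Set X, IsClopen a ∧ IsFilt a ∧ x ∈ a ∧ y ∉ a) :
    (∀ s : Set X, s.Nonempty → ∃ z : X, IsGLB s z) ∧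
    ∃ b : X, ∀ x : X, b ≤ x := by
  -- downsets are closed
  have closed_le : ∀ x : X, IsClosed {z : X | z ≤ x} := by
    intro x
    rw [← isOpen_compl_iff, isOpen_iff_mem_nhds]
    intro z hz
    obtain ⟨a, hac, haf, hza, hxa⟩ := hms z x hz
    refine Filter.mem_of_superset (hac.isOpen.mem_nhds hza) ?_
    intro w hw hwx
    exact hxa (haf.1 w x hw hwx)
  -- upsets are closed
  have closed_ge : ∀ x : X, IsClosed {z : X | x ≤ z} := by
    intro x
    rw [← isOpen_compl_iff, isOpen_iff_mem_nhds]
    intro z hz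
    obtain ⟨a, hac, haf, hxa, hza⟩ := hms x z hz
    refine Filter.mem_of_superset (hac.compl.isOpen.mem_nhds hza) ?_
    intro w hw hxw
    exact hw (haf.1 x w hxa hxw)
  have main : ∀ s : Set X, s.Nonempty → ∃ z : X, IsGLB s z := by
    intro s ⟨x₀, hx₀⟩
    set ι := (↥s) ⊕ (↥(lowerBounds s)) with hι
    set Z : ι → Set X := fun i =>
      Sum.rec (fun x => {z : X | z ≤ x.1}) (fun z => {w : X | z.1 ≤ w}) i with hZ
    have hZc : ∀ i, IsClosed (Z i) := by
      rintro (x | z)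
      · exact closed_le x.1
      · exact closed_ge z.1
    have hne : (⋂ i, Z i).Nonempty := by
      by_contra hempty
      rw [Set.not_nonempty_iff_eq_empty] at hempty
      have h0 : (Set.univ : Set X) ∩ ⋂ i, Z i = ∅ := by simp [hempty]
      obtain ⟨t, ht⟩ := isCompact_univ.elim_finite_subfamily_closed Z hZc h0
      -- construct a witness in the finite intersection
      classical
      let A : Finset X :=
        insert x₀ ((t.filter (fun i => i.isLeft)).image
          (fun i => Sum.rec (fun x => x.1) (fun z => z.1) i))
      have hAne : A.Nonempty := ⟨x₀, Finset.mem_insert_self _ _⟩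
      have hAs : ∀ a ∈ A, a ∈ s := by
        intro a ha
        rcases Finset.mem_insert.1 ha with h | h
        · exact h ▸ hx₀
        · obtain ⟨i, hi, rfl⟩ := Finset.mem_image.1 h
          rcases i with x | z
          · exact x.2
          · simp at hi
      set w : X := A.inf' hAne id with hw
      have hwmem : w ∈ (Set.univ : Set X) ∩ ⋂ i ∈ t, Z i := by
        refine ⟨trivial, Set.mem_iInter₂.2 ?_⟩
        rintro (x | z) hi
        · have hxA : x.1 ∈ A := by
            refine Finset.mem_insert.2 (Or.inr (Finset.mem_image.2 ⟨Sum.inl x, ?_, rfl⟩))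
            simp [hi]
          exact Finset.inf'_le id hxA
        · refine Finset.le_inf' hAne id ?_
          intro a ha
          exact z.2 (hAs a ha)
      rw [ht] at hwmem
      exact hwmem
    obtain ⟨z, hz⟩ := hne
    refine ⟨z, ?_, ?_⟩
    · intro x hx
      exact Set.mem_iInter.1 hz (Sum.inl ⟨x, hx⟩)
    · intro y hy
      exact Set.mem_iInter.1 hz (Sum.inr ⟨y, hy⟩)
  refine ⟨main, ?_⟩
  obtain ⟨b, hb⟩ := main Set.univ ⟨Classical.arbitrary X, Set.mem_univ _⟩
  exact ⟨b, fun x => hb.1 (Set.mem_univ x)⟩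
end

section
/- Let M = (X, ≤, R, V) be a modal L-model. Then for every formula φ of positive modal logic (built from propositional letters, ⊤, ⊥, ∧, ∨, □, ◇ with the filter semantics where V assigns filters), the truth set of φ is a filter of (X, ≤). -/
/-- Formulae of positive modal logic over a set `P` of proposition letters. -/
inductive Fm (P : Type*) : Type _
  | pr : P → Fm P
  | top : Fm P
  | bot : Fm P
  | and : Fm P → Fm P → Fm P
  | or : Fm P → Fm P → Fm P
  | box : Fm P → Fm P
  | dia : Fm P → Fm P

/-- The truth set of a formula in a modal L-model `(X, ≤, R, V)`, with the
filter semantics: disjunction at `x` holds iff one disjunct holds at `x` or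
there are `y, z` satisfying the disjuncts with `y ⊓ z ≤ x`; `□` and `◇` are
interpreted via the relation `R` as usual. -/
def truthSet {X P : Type*} [SemilatticeInf X] (R : X → X → Prop)
    (V : P → Set X) : Fm P → Set X
  | Fm.pr p => V p
  | Fm.top => Set.univ
  | Fm.bot => ∅
  | Fm.and φ ψ => truthSet R V φ ∩ truthSet R V ψ
  | Fm.or φ ψ => {x | x ∈ truthSet R V φ ∨ x ∈ truthSet R V ψ ∨
      ∃ y z : X, y ∈ truthSet R V φ ∧ z ∈ truthSet R V ψ ∧ y ⊓ z ≤ x}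
  | Fm.box φ => {x | ∀ y : X, R x y → y ∈ truthSet R V φ}
  | Fm.dia φ => {x | ∃ y : X, R x y ∧ y ∈ truthSet R V φ}

/-- In a modal L-model, the truth set of every positive modal formula is a
filter. -/
theorem truthSet_isFilt {X P : Type*} [SemilatticeInf X]
    (R : X → X → Prop) (V : P → Set X)
    (h1 : ∀ x y z : X, x ≤ y → R y z → ∃ w : X, R x w ∧ w ≤ z)
    (h2 : ∀ x y w : X, x ≤ y → R x w → ∃ z : X, R y z ∧ w ≤ z)
    (h3 : ∀ x y z : X, R (x ⊓ y) z →
      ∃ v w : X, R x v ∧ R y w ∧ v ⊓ w ≤ z)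
    (h4 : ∀ x y v w : X, R x v → R y w → R (x ⊓ y) (v ⊓ w))
    (h5 : ∀ x : X, ∃ y : X, R x y)
    (hV : ∀ p : P, IsFilt (V p)) :
    ∀ φ : Fm P, IsFilt (truthSet R V φ) := by
  intro φ
  induction φ with
  | pr p => exact hV p
  | top => exact ⟨fun _ _ _ _ => trivial, fun _ _ _ _ => trivial⟩
  | bot => exact ⟨fun _ _ h _ => h.elim, fun _ _ h _ => h.elim⟩
  | and φ ψ ihφ ihψ =>
    exact ⟨fun x y hx hxy => ⟨ihφ.1 x y hx.1 hxy, ihψ.1 x y hx.2 hxy⟩,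
      fun x y hx hy => ⟨ihφ.2 x y hx.1 hy.1, ihψ.2 x y hx.2 hy.2⟩⟩
  | or φ ψ ihφ ihψ =>
    constructor
    · intro x y hx hxy
      rcases hx with h | h | ⟨a, b, ha, hb, hab⟩
      · exact Or.inl (ihφ.1 x y h hxy)
      · exact Or.inr (Or.inl (ihψ.1 x y h hxy))
      · exact Or.inr (Or.inr ⟨a, b, ha, hb, hab.trans hxy⟩)
    · intro x y hx hy
      rcases hx with hx | hx | ⟨a, b, ha, hb, hab⟩
      · rcases hy with hy | hy | ⟨c, d, hc, hd, hcd⟩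
        · exact Or.inl (ihφ.2 x y hx hy)
        · exact Or.inr (Or.inr ⟨x, y, hx, hy, le_refl _⟩)
        · refine Or.inr (Or.inr ⟨x ⊓ c, d, ihφ.2 x c hx hc, hd, ?_⟩)
          calc (x ⊓ c) ⊓ d = x ⊓ (c ⊓ d) := inf_assoc ..
            _ ≤ x ⊓ y := inf_le_inf_left x hcd
      · rcases hy with hy | hy | ⟨c, d, hc, hd, hcd⟩
        · exact Or.inr (Or.inr ⟨y, x, hy, hx, inf_comm y x ▸ le_refl _⟩)
        · exact Or.inr (Or.inl (ihψ.2 x y hx hy))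
        · refine Or.inr (Or.inr ⟨c, x ⊓ d, hc, ihψ.2 x d hx hd, ?_⟩)
          calc c ⊓ (x ⊓ d) ≤ x ⊓ (c ⊓ d) :=
                le_inf (inf_le_of_right_le inf_le_left)
                  (le_inf inf_le_left (inf_le_of_right_le inf_le_right))
            _ ≤ x ⊓ y := inf_le_inf_left x hcd
      · rcases hy with hy | hy | ⟨c, d, hc, hd, hcd⟩
        · refine Or.inr (Or.inr ⟨y ⊓ a, b, ihφ.2 y a hy ha, hb, ?_⟩)
          calc (y ⊓ a) ⊓ b = y ⊓ (a ⊓ b) := inf_assoc ..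
            _ ≤ y ⊓ x := inf_le_inf_left y hab
            _ = x ⊓ y := inf_comm ..
        · refine Or.inr (Or.inr ⟨a, y ⊓ b, ha, ihψ.2 y b hy hb, ?_⟩)
          calc a ⊓ (y ⊓ b) ≤ y ⊓ (a ⊓ b) :=
                le_inf (inf_le_of_right_le inf_le_left)
                  (le_inf inf_le_left (inf_le_of_right_le inf_le_right))
            _ ≤ y ⊓ x := inf_le_inf_left y hab
            _ = x ⊓ y := inf_comm ..
        · refine Or.inr (Or.inr ⟨a ⊓ c, b ⊓ d, ihφ.2 a c ha hc, ihψ.2 b d hb hd, ?_⟩)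
          calc (a ⊓ c) ⊓ (b ⊓ d) ≤ (a ⊓ b) ⊓ (c ⊓ d) :=
                le_inf (le_inf (inf_le_of_left_le inf_le_left)
                    (inf_le_of_right_le inf_le_left))
                  (le_inf (inf_le_of_left_le inf_le_right)
                    (inf_le_of_right_le inf_le_right))
            _ ≤ x ⊓ y := inf_le_inf hab hcd
  | box φ ihφ =>
    constructor
    · intro x y hx hxy z hyz
      obtain ⟨w, hxw, hwz⟩ := h1 x y z hxy hyz
      exact ihφ.1 w z (hx w hxw) hwz
    · intro x y hx hy z hz
      obtain ⟨v, w, hxv, hyw, hvw⟩ := h3 x y z hz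
      exact ihφ.1 _ z (ihφ.2 v w (hx v hxv) (hy w hyw)) hvw
  | dia φ ihφ =>
    constructor
    · intro x y ⟨w, hxw, hw⟩ hxy
      obtain ⟨z, hyz, hwz⟩ := h2 x y w hxy hxw
      exact ⟨z, hyz, ihφ.1 w z hw hwz⟩
    · intro x y ⟨v, hxv, hv⟩ ⟨w, hyw, hw⟩
      exact ⟨v ⊓ w, h4 x y v w hxv hyw, ihφ.2 v w hv hw⟩
end
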